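/- Let P be a group of errors, 𝒞 a recursive [[n,k,s,m]] morphism with speed η, and E = (M, L₁, S₁, …, L_N, S_N) an input to 𝒞_N with every S_i ∈ Z^s, with output (P₁, …, P_N, M′) = 𝒞_N(E). For every index j with 0 ≤ j ≤ w_L − 1 such that M_j ∈ M₁, the weight of the partial output (P_{N_j+1}, …, P_{N_{j+1}−1}) is at least (N_{j+1} − N_j)/η − 1. -/
import Mathlib


open scoped BigOperators

namespace Turbo

variable {P : Type} [Group P]

/-- Weight of an error: the number of non-identity coordinates. -/
noncomputable def wt {n : ℕ} (E : Fin n → P) : ℕ := {i | E i ≠ 1}.ncard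

/-- Pad a finite sequence of blocks to an infinite one by identity blocks. -/
def pad {β : Type} [One β] {N : ℕ} (x : Fin N → β) : ℕ → β :=
  fun i => if h : i < N then x ⟨i, h⟩ else 1

/-- All blocks of a stabilizer sequence have coordinates in `Z`. -/
def ZValued (Z : Subgroup P) {s : ℕ} (S : ℕ → Fin s → P) : Prop := ∀ i j, S i j ∈ Z

/-- Intermediate memory error `M_i` of a convolutional morphism built from the seed `F`. -/
def convMem {m k s n : ℕ}
    (F : ((Fin m → P) × (Fin k → P) × (Fin s → P)) → ((Fin n → P) × (Fin m → P)))
    (M : Fin m → P) (L : ℕ → Fin k → P) (S : ℕ → Fin s → P) : ℕ → Fin m → P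
  | 0 => M
  | i + 1 => (F (convMem F M L S i, L i, S i)).2

/-- The `i`-th physical output block `P_{i+1}` of the convolutional morphism. -/
def convOut {m k s n : ℕ}
    (F : ((Fin m → P) × (Fin k → P) × (Fin s → P)) → ((Fin n → P) × (Fin m → P)))
    (M : Fin m → P) (L : ℕ → Fin k → P) (S : ℕ → Fin s → P) (i : ℕ) : Fin n → P :=
  (F (convMem F M L S i, L i, S i)).1

/-- Weight of the physical output `π_N` (first `N` physical blocks). -/
noncomputable def outWt {m k s n : ℕ}
    (F : ((Fin m → P) × (Fin k → P) × (Fin s → P)) → ((Fin n → P) × (Fin m → P)))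
    (M : Fin m → P) (L : ℕ → Fin k → P) (S : ℕ → Fin s → P) (N : ℕ) : ℕ :=
  ∑ i ∈ Finset.range N, wt (convOut F M L S i)

/-- Weight of the full output `𝒞_N(E) = (P_1, …, P_N, M_N)`. -/
noncomputable def fullWt {m k s n : ℕ}
    (F : ((Fin m → P) × (Fin k → P) × (Fin s → P)) → ((Fin n → P) × (Fin m → P)))
    (M : Fin m → P) (L : ℕ → Fin k → P) (S : ℕ → Fin s → P) (N : ℕ) : ℕ :=
  outWt F M L S N + wt (convMem F M L S N)

/-- The output `𝒞_∞(E)` of the infinite convolutional morphism has infinite weight. -/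
def InfOutput {m k s n : ℕ}
    (F : ((Fin m → P) × (Fin k → P) × (Fin s → P)) → ((Fin n → P) × (Fin m → P)))
    (M : Fin m → P) (L : ℕ → Fin k → P) (S : ℕ → Fin s → P) : Prop :=
  {i : ℕ | convOut F M L S i ≠ 1}.Infinite

/-- The information part of an infinite input has exactly one non-identity letter. -/
def OneInfoLetter {k : ℕ} (L : ℕ → Fin k → P) : Prop :=
  ∃! p : ℕ × Fin k, L p.1 p.2 ≠ 1

/-- A recursive `[[n,k,s,m]]` morphism. -/
def Recursive {m k s n : ℕ} (Z : Subgroup P)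
    (F : ((Fin m → P) × (Fin k → P) × (Fin s → P)) → ((Fin n → P) × (Fin m → P))) : Prop :=
  ∀ (L : ℕ → Fin k → P) (S : ℕ → Fin s → P),
    OneInfoLetter L → ZValued Z S → InfOutput F 1 L S

/-- A systematic morphism: the output weight dominates the information weight. -/
def Systematic {m k s n : ℕ}
    (F : ((Fin m → P) × (Fin k → P) × (Fin s → P)) → ((Fin n → P) × (Fin m → P))) : Prop :=
  ∀ (N : ℕ) (M : Fin m → P) (L : ℕ → Fin k → P) (S : ℕ → Fin s → P),
    (∑ i ∈ Finset.range N, wt (L i)) ≤ fullWt F M L S N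

/-- The set `M₁` of memory errors giving an infinite output on trivial information input. -/
def M1 {m k s n : ℕ} (Z : Subgroup P)
    (F : ((Fin m → P) × (Fin k → P) × (Fin s → P)) → ((Fin n → P) × (Fin m → P))) :
    Set (Fin m → P) :=
  {M | ∀ S : ℕ → Fin s → P, ZValued Z S → InfOutput F M 1 S}

/-- The set of candidate speeds of a morphism. -/
def speedSet {m k s n : ℕ} (Z : Subgroup P)
    (F : ((Fin m → P) × (Fin k → P) × (Fin s → P)) → ((Fin n → P) × (Fin m → P))) : Set ℕ :=
  {η | 0 < η ∧ ∀ M ∈ M1 Z F, ∀ S : ℕ → Fin s → P, ZValued Z S → 1 ≤ outWt F M 1 S η}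

/-- `η` is the speed of the morphism `F`. -/
def IsSpeed {m k s n : ℕ} (Z : Subgroup P)
    (F : ((Fin m → P) × (Fin k → P) × (Fin s → P)) → ((Fin n → P) × (Fin m → P)))
    (η : ℕ) : Prop :=
  IsLeast (speedSet Z F) η

/-- The set `𝕀` of memory errors accessible from the identity memory with trivial
information and `Z`-valued stabilizers. -/
def Iset {m k s n : ℕ} (Z : Subgroup P)
    (F : ((Fin m → P) × (Fin k → P) × (Fin s → P)) → ((Fin n → P) × (Fin m → P))) :
    Set (Fin m → P) :=
  {M | ∃ (N : ℕ) (S : ℕ → Fin s → P), ZValued Z S ∧ M = convMem F 1 1 S N}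

/- ### Block `[[n,k]]` encoders -/

/-- `E` is undetected for the `[[n,k]]` encoder `C`. -/
def Undetected {k n : ℕ} (Z : Subgroup P)
    (C : ((Fin k → P) × (Fin (n - k) → P)) ≃* (Fin n → P)) (E : Fin n → P) : Prop :=
  E ≠ 1 ∧ ∀ j, (C.symm E).2 j ∈ Z

/-- `E` is harmful for the `[[n,k]]` encoder `C`. -/
def Harmful {k n : ℕ} (Z : Subgroup P)
    (C : ((Fin k → P) × (Fin (n - k) → P)) ≃* (Fin n → P)) (E : Fin n → P) : Prop :=
  Undetected Z C E ∧ (C.symm E).1 ≠ 1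

/-- The distance `d_c` of an `[[n,k]]` encoder. -/
noncomputable def encDist {k n : ℕ} (Z : Subgroup P)
    (C : ((Fin k → P) × (Fin (n - k) → P)) ≃* (Fin n → P)) : ℕ :=
  sInf {w | ∃ E, Harmful Z C E ∧ wt E = w}

/-- The degenerate distance `d_q` of an `[[n,k]]` encoder. -/
noncomputable def encDegenDist {k n : ℕ} (Z : Subgroup P)
    (C : ((Fin k → P) × (Fin (n - k) → P)) ≃* (Fin n → P)) : ℕ :=
  sInf {w | ∃ E, Undetected Z C E ∧ wt E = w}

/-- Weight distribution `a^{⊗N}(d)` of the blockwise encoder `C^{⊗N}`. -/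
noncomputable def aTensor {k n : ℕ} (Z : Subgroup P)
    (C : ((Fin k → P) × (Fin (n - k) → P)) ≃* (Fin n → P)) (N d : ℕ) : ℕ :=
  Set.ncard {E : (Fin N → Fin k → P) × (Fin N → Fin (n - k) → P) |
    (∀ i j, E.2 i j ∈ Z) ∧ E.1 ≠ 1 ∧ (∑ i, wt (C (E.1 i, E.2 i))) = d}

/- ### `[[n,k,m]]` encoders and their truncated decoders -/

/-- The truncated decoder `C̄` of an `[[n,k,m]]` encoder `C`, as a `[[k,n,0,m]]` morphism. -/
def truncDecoder {m k n : ℕ}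
    (C : ((Fin m → P) × (Fin k → P) × (Fin (n - k) → P)) ≃* ((Fin n → P) × (Fin m → P))) :
    ((Fin m → P) × (Fin n → P) × (Fin 0 → P)) → ((Fin k → P) × (Fin m → P)) :=
  fun x => ((C.symm (x.2.1, x.1)).2.1, (C.symm (x.2.1, x.1)).1)

/-- Weight distribution `a_N(w, d)` of a convolutional morphism. -/
noncomputable def aN {m k s n : ℕ} (Z : Subgroup P)
    (F : ((Fin m → P) × (Fin k → P) × (Fin s → P)) → ((Fin n → P) × (Fin m → P)))
    (N w d : ℕ) : ℕ :=
  Set.ncard {ML : (Fin m → P) × (Fin N → Fin k → P) |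
    (wt ML.1 + ∑ i, wt (ML.2 i)) = w ∧
    ∃ S : Fin N → Fin s → P, (∀ i j, S i j ∈ Z) ∧
      fullWt F ML.1 (pad ML.2) (pad S) N = d}

/-- Weight distribution `a_N(w, ≤ d)` of a convolutional morphism. -/
noncomputable def aNle {m k s n : ℕ} (Z : Subgroup P)
    (F : ((Fin m → P) × (Fin k → P) × (Fin s → P)) → ((Fin n → P) × (Fin m → P)))
    (N w : ℕ) (d : ℝ) : ℕ :=
  Set.ncard {ML : (Fin m → P) × (Fin N → Fin k → P) |
    (wt ML.1 + ∑ i, wt (ML.2 i)) = w ∧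
    ∃ S : Fin N → Fin s → P, (∀ i j, S i j ∈ Z) ∧
      (fullWt F ML.1 (pad ML.2) (pad S) N : ℝ) ≤ d}

/- ### Traces and detours -/

/-- Replace every information letter at (1-indexed flattened) position `> p` by the identity. -/
def truncAfter {k : ℕ} (L : ℕ → Fin k → P) (p : ℕ) : ℕ → Fin k → P :=
  fun i j => if i * k + (j : ℕ) + 1 ≤ p then L i j else 1

/-- `q` is the (1-indexed flattened) position of a non-identity information letter of the
first `N` information blocks. -/
def IsInfoPos {k : ℕ} (N : ℕ) (L : ℕ → Fin k → P) (q : ℕ) : Prop :=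
  ∃ (i : ℕ) (j : Fin k), i < N ∧ q = i * k + (j : ℕ) + 1 ∧ L i j ≠ 1

/-- The information part of the `i`-th truncature `E_{∖i}`. -/
def truncInfo {k : ℕ} (L : ℕ → Fin k → P) (p : ℕ → ℕ) : ℕ → (ℕ → Fin k → P)
  | 0 => 1
  | i + 1 => truncAfter L (p i)

/-- The number `N_i` of blocks making up the `i`-th truncature (with `N_0 = 0`):
the block containing the position `p i`. -/
def cutOf (k : ℕ) (p : ℕ → ℕ) : ℕ → ℕ
  | 0 => 0
  | i + 1 => (p i - 1) / k + 1

/-- Extend a stabilizer sequence: the first `cut` blocks come from `S`, the rest from `St`. -/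
def extendS {s : ℕ} (S : ℕ → Fin s → P) (cut : ℕ) (St : ℕ → Fin s → P) : ℕ → Fin s → P :=
  fun j => if j < cut then S j else St (j - cut)

/-- The intermediate memory error `M_i` attached to the `i`-th truncature `E_{∖i}`. -/
def traceMem {m k s n : ℕ}
    (F : ((Fin m → P) × (Fin k → P) × (Fin s → P)) → ((Fin n → P) × (Fin m → P)))
    (M : Fin m → P) (L : ℕ → Fin k → P) (S : ℕ → Fin s → P) (p : ℕ → ℕ) : ℕ → Fin m → P
  | 0 => M
  | i + 1 => convMem F M (truncAfter L (p i)) S ((p i - 1) / k + 1)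

/-- Paper-indexed positions: `pp p 0 = 0` and `pp p j = p (j-1)` for `j ≥ 1`. -/
def pp (p : ℕ → ℕ) : ℕ → ℕ
  | 0 => 0
  | j + 1 => p j

/-- The segment `[a, c)` of the trace `b` is a terminating detour: a nonempty run of `1`'s
followed by a single final `0`. -/
def IsTermDetour (b : ℕ → Prop) (a c : ℕ) : Prop :=
  a + 1 < c ∧ (∀ t, a ≤ t → t + 1 < c → b t) ∧ ¬ b (c - 1)

/-- The segment `[a, c)` of the trace `b` is a detour: a nonempty run of `1`'s, possibly
completed with a single final `0`. -/
def IsDetour (b : ℕ → Prop) (a c : ℕ) : Prop :=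
  (a < c ∧ ∀ t, a ≤ t → t < c → b t) ∨ IsTermDetour b a c

section Aux

variable {m k s n : ℕ}
variable (F : ((Fin m → P) × (Fin k → P) × (Fin s → P)) → ((Fin n → P) × (Fin m → P)))

lemma convMem_congr (M : Fin m → P) {L L' : ℕ → Fin k → P} {S S' : ℕ → Fin s → P} (t : ℕ)
    (hL : ∀ i, i < t → L i = L' i) (hS : ∀ i, i < t → S i = S' i) :
    convMem F M L S t = convMem F M L' S' t := by
  induction t with
  | zero => rfl
  | succ t ih =>
    simp only [convMem]
    rw [ih (fun i hi => hL i (hi.trans t.lt_succ_self))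
        (fun i hi => hS i (hi.trans t.lt_succ_self)),
      hL t t.lt_succ_self, hS t t.lt_succ_self]

lemma convMem_add (M : Fin m → P) (L : ℕ → Fin k → P) (S : ℕ → Fin s → P) (a i : ℕ) :
    convMem F M L S (a + i) =
      convMem F (convMem F M L S a) (fun r => L (a + r)) (fun r => S (a + r)) i := by
  induction i with
  | zero => rfl
  | succ i ih =>
    rw [Nat.add_succ]
    simp only [convMem, ih]

lemma convOut_add (M : Fin m → P) (L : ℕ → Fin k → P) (S : ℕ → Fin s → P) (a i : ℕ) :
    convOut F M L S (a + i) =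
      convOut F (convMem F M L S a) (fun r => L (a + r)) (fun r => S (a + r)) i := by
  simp only [convOut, convMem_add]

lemma convOut_congr (M : Fin m → P) {L L' : ℕ → Fin k → P} {S S' : ℕ → Fin s → P} (t : ℕ)
    (hL : ∀ i, i ≤ t → L i = L' i) (hS : ∀ i, i ≤ t → S i = S' i) :
    convOut F M L S t = convOut F M L' S' t := by
  simp only [convOut]
  rw [convMem_congr F M t (fun i hi => hL i hi.le) (fun i hi => hS i hi.le),
    hL t le_rfl, hS t le_rfl]

lemma nat_block_bounds {k : ℕ} (hk : 0 < k) {q : ℕ} (hq : 1 ≤ q) :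
    (q - 1) / k * k + 1 ≤ q ∧ q ≤ ((q - 1) / k + 1) * k := by
  constructor
  · have h1 := Nat.div_mul_le_self (q - 1) k
    omega
  · have h1 := Nat.div_add_mod (q - 1) k
    have h2 := Nat.mod_lt (q - 1) hk
    have h3 : ((q - 1) / k + 1) * k = (q - 1) / k * k + k := by ring
    have h4 : (q - 1) / k * k = k * ((q - 1) / k) := Nat.mul_comm _ _
    have h5 : q - 1 + 1 = q := by omega
    linarith

lemma M1_step (Z : Subgroup P)
    {F : ((Fin m → P) × (Fin k → P) × (Fin s → P)) → ((Fin n → P) × (Fin m → P))}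
    {M : Fin m → P} (hM : M ∈ M1 Z F)
    {S0 : Fin s → P} (hS0 : ∀ j, S0 j ∈ Z) : (F (M, 1, S0)).2 ∈ M1 Z F := by
  intro T hT
  set S : ℕ → Fin s → P := fun i => Nat.casesOn i S0 T with hSdef
  have hZS : ZValued Z S := by
    intro i jj
    cases i with
    | zero => exact hS0 jj
    | succ i => exact hT i jj
  have hinf := hM S hZS
  by_contra hfin
  rw [InfOutput, Set.not_infinite] at hfin
  have hfin' : {i : ℕ | convOut F M 1 S i ≠ 1}.Finite := by
    apply Set.Finite.subset ((hfin.image (· + 1)).insert 0)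
    intro i hi
    cases i with
    | zero => exact Set.mem_insert _ _
    | succ i =>
      refine Set.mem_insert_of_mem _ ⟨i, ?_, rfl⟩
      have key : convOut F M 1 S (1 + i) = convOut F (F (M, 1, S0)).2 1 T i := by
        rw [convOut_add]
        have h1 : (fun r => S (1 + r)) = T := by
          funext r
          rw [Nat.add_comm]
        rw [h1]
        rfl
      rw [Nat.add_comm] at key
      rw [Set.mem_setOf_eq, ← key]
      exact hi
  exact hinf hfin'

lemma M1_iter (Z : Subgroup P)
    {F : ((Fin m → P) × (Fin k → P) × (Fin s → P)) → ((Fin n → P) × (Fin m → P))}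
    {M : Fin m → P} (hM : M ∈ M1 Z F)
    {S : ℕ → Fin s → P} (hZS : ZValued Z S) : ∀ r, convMem F M 1 S r ∈ M1 Z F := by
  intro r
  induction r with
  | zero => exact hM
  | succ r ih => exact M1_step Z ih (fun jj => hZS r jj)

lemma chunk_bound (Z : Subgroup P) {η : ℕ}
    {F : ((Fin m → P) × (Fin k → P) × (Fin s → P)) → ((Fin n → P) × (Fin m → P))}
    (hη : IsSpeed Z F η) {M : Fin m → P} (hM : M ∈ M1 Z F)
    {S : ℕ → Fin s → P} (hZS : ZValued Z S) (q : ℕ) :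
    q ≤ ∑ i ∈ Finset.range (q * η), wt (convOut F M 1 S i) := by
  induction q with
  | zero => simp
  | succ q ih =>
    have hsplit : (q + 1) * η = q * η + η := by ring
    rw [hsplit, Finset.sum_range_add]
    have h2 : ∑ i ∈ Finset.range η, wt (convOut F M 1 S (q * η + i)) =
        outWt F (convMem F M 1 S (q * η)) 1 (fun r => S (q * η + r)) η := by
      simp only [outWt, convOut_add]
      rfl
    have h3 : 1 ≤ outWt F (convMem F M 1 S (q * η)) 1 (fun r => S (q * η + r)) η :=
      hη.1.2 _ (M1_iter Z hM hZS (q * η)) _ (fun i jj => hZS _ jj)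
    rw [h2]
    omega

end Aux

end Turbo
open Turbo in
/-- Between two consecutive non-identity information letters, if the intermediate memory
error `M_j` is in `M₁`, the physical blocks `P_{N_j+1}, …, P_{N_{j+1}-1}` have total weight
at least `(N_{j+1} - N_j)/η - 1`. -/
theorem detour_output_weight {P : Type} [Group P] [Finite P] (Z : Subgroup P) (hZ : Z ≠ ⊤)
    {m k s n : ℕ}
    (𝒞 : ((Fin m → P) × (Fin k → P) × (Fin s → P)) →* ((Fin n → P) × (Fin m → P)))
    (hrec : Recursive Z ⇑𝒞) (η : ℕ) (hη : IsSpeed Z ⇑𝒞 η)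
    (N : ℕ) (M : Fin m → P) (L : Fin N → Fin k → P) (S : Fin N → Fin s → P)
    (hS : ∀ i j, S i j ∈ Z)
    (wL : ℕ) (p : ℕ → ℕ)
    (hmono : ∀ i j, i < j → j < wL → p i < p j)
    (hrange : ∀ q, IsInfoPos N (pad L) q ↔ ∃ i < wL, p i = q) :
    ∀ j, j < wL → traceMem ⇑𝒞 M (pad L) (pad S) p j ∈ M1 Z ⇑𝒞 →
      ((cutOf k p (j + 1) : ℝ) - (cutOf k p j : ℝ)) / (η : ℝ) - 1 ≤
        ∑ t ∈ Finset.Ico (cutOf k p j) (cutOf k p (j + 1) - 1),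
          (wt (convOut ⇑𝒞 M (pad L) (pad S) t) : ℝ) := by
  intro j hj hMj
  have hηpos : 0 < η := hη.1.1
  have hηR : (0 : ℝ) < (η : ℝ) := by exact_mod_cast hηpos
  obtain ⟨a, ha⟩ : ∃ a, cutOf k p j = a := ⟨_, rfl⟩
  obtain ⟨b, hb⟩ : ∃ b, cutOf k p (j + 1) = b := ⟨_, rfl⟩
  rw [ha, hb]
  by_cases hab : a < b
  · -- main case
    have hple : ∀ i i', i ≤ i' → i' < wL → p i ≤ p i' := by
      intro i i' hii hi'
      rcases Nat.eq_or_lt_of_le hii with h | h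
      · rw [h]
      · exact (hmono i i' h hi').le
    have hpos1 : ∀ i, i < wL → 1 ≤ p i := by
      intro i hi
      obtain ⟨ti, ji, _, heq, _⟩ := (hrange (p i)).mpr ⟨i, hi, rfl⟩
      rw [heq]
      exact Nat.le_add_left 1 _
    have hk : 0 < k := by
      obtain ⟨ti, ji, _, _, _⟩ := (hrange (p j)).mpr ⟨j, hj, rfl⟩
      exact lt_of_le_of_lt (Nat.zero_le _) ji.isLt
    have hb' : b = (p j - 1) / k + 1 := hb.symm
    have hP1 : ∀ i, i < j → p i ≤ a * k := by
      intro i hij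
      cases j with
      | zero => exact absurd hij (Nat.not_lt_zero i)
      | succ j' =>
        have hj' : j' < wL := by omega
        have h1 : p i ≤ p j' := hple i j' (by omega) hj'
        have h2 : p j' ≤ ((p j' - 1) / k + 1) * k := (nat_block_bounds hk (hpos1 j' hj')).2
        have h3 : a = (p j' - 1) / k + 1 := ha.symm
        rw [h3]
        exact h1.trans h2
    have hP2 : ∀ i, j ≤ i → i < wL → (b - 1) * k + 1 ≤ p i := by
      intro i hji hiw
      have h1 : (p j - 1) / k * k + 1 ≤ p j := (nat_block_bounds hk (hpos1 j hj)).1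
      have h2 : b - 1 = (p j - 1) / k := by omega
      rw [h2]
      exact h1.trans (hple j i hji hiw)
    have hLtriv : ∀ t, a ≤ t → t < b - 1 → pad L t = 1 := by
      intro t hat htb
      by_cases htN : t < N
      · funext jj
        by_contra hne
        have hpos : IsInfoPos N (pad L) (t * k + (jj : ℕ) + 1) := ⟨t, jj, htN, rfl, hne⟩
        obtain ⟨i, hiw, hpi⟩ := (hrange _).mp hpos
        rcases Nat.lt_or_ge i j with hij | hij
        · have h1 := hP1 i hij
          have h2 : a * k ≤ t * k := mul_le_mul_left hat k
          linarith
        · have h1 := hP2 i hij hiw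
          have h2 : (t + 1) * k ≤ (b - 1) * k := mul_le_mul_left (by omega : t + 1 ≤ b - 1) k
          have h3 : (t + 1) * k = t * k + k := by ring
          have h4 : (jj : ℕ) < k := jj.isLt
          linarith
      · funext jj
        simp [pad, htN]
    have hMem : traceMem (⇑𝒞) M (pad L) (pad S) p j = convMem (⇑𝒞) M (pad L) (pad S) a := by
      cases j with
      | zero =>
        have ha0 : a = 0 := ha.symm
        subst ha0
        rfl
      | succ j' =>
        have h3 : a = (p j' - 1) / k + 1 := ha.symm
        rw [h3]
        show convMem (⇑𝒞) M (truncAfter (pad L) (p j')) (pad S) ((p j' - 1) / k + 1)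
          = convMem (⇑𝒞) M (pad L) (pad S) ((p j' - 1) / k + 1)
        refine convMem_congr _ _ _ (fun i hi => ?_) (fun i hi => rfl)
        have hia : i < a := by rw [h3]; exact hi
        funext jj
        show (if i * k + (jj : ℕ) + 1 ≤ p j' then pad L i jj else 1) = pad L i jj
        split_ifs with hcond
        · rfl
        · symm
          by_cases hiN : i < N
          · by_contra hne'
            have hpos : IsInfoPos N (pad L) (i * k + (jj : ℕ) + 1) := ⟨i, jj, hiN, rfl, hne'⟩
            obtain ⟨r, hrw, hpr⟩ := (hrange _).mp hpos
            rcases Nat.lt_or_ge r (j' + 1) with hr | hr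
            · have h1 : p r ≤ p j' := hple r j' (by omega) (by omega)
              have h2 : p j' < i * k + (jj : ℕ) + 1 := Nat.lt_of_not_le hcond
              linarith
            · have h5 := hP2 r hr hrw
              have h6 : (i + 1) * k ≤ (b - 1) * k :=
                mul_le_mul_left (by omega : i + 1 ≤ b - 1) k
              have h7 : (i + 1) * k = i * k + k := by ring
              have h8 : (jj : ℕ) < k := jj.isLt
              linarith
          · simp [pad, hiN]
    have hMa : convMem (⇑𝒞) M (pad L) (pad S) a ∈ M1 Z (⇑𝒞) := hMem ▸ hMj
    have hZS' : ZValued Z (fun r => pad S (a + r)) := by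
      intro i jj
      simp only [pad]
      split
      · exact hS _ jj
      · exact Z.one_mem
    have hterm : ∀ i, i < b - 1 - a →
        convOut (⇑𝒞) M (pad L) (pad S) (a + i)
          = convOut (⇑𝒞) (convMem (⇑𝒞) M (pad L) (pad S) a) 1 (fun r => pad S (a + r)) i := by
      intro i hi
      rw [convOut_add]
      exact convOut_congr _ _ i
        (fun r hr => hLtriv (a + r) (Nat.le_add_right a r) (by omega))
        (fun r hr => rfl)
    have hsum : ∑ t ∈ Finset.Ico a (b - 1), (wt (convOut (⇑𝒞) M (pad L) (pad S) t) : ℝ)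
        = ∑ i ∈ Finset.range (b - 1 - a),
            (wt (convOut (⇑𝒞) (convMem (⇑𝒞) M (pad L) (pad S) a) 1
              (fun r => pad S (a + r)) i) : ℝ) := by
      rw [Finset.sum_Ico_eq_sum_range]
      exact Finset.sum_congr rfl (fun i hi => by rw [hterm i (Finset.mem_range.mp hi)])
    rw [hsum]
    have hq := chunk_bound Z hη hMa hZS' ((b - 1 - a) / η)
    have hle : (b - 1 - a) / η ≤ ∑ i ∈ Finset.range (b - 1 - a),
        wt (convOut (⇑𝒞) (convMem (⇑𝒞) M (pad L) (pad S) a) 1 (fun r => pad S (a + r)) i) :=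
      hq.trans (Finset.sum_le_sum_of_subset
        (Finset.range_subset_range.mpr (Nat.div_mul_le_self _ _)))
    have hcast : (((b - 1 - a) / η : ℕ) : ℝ) ≤ ∑ i ∈ Finset.range (b - 1 - a),
        (wt (convOut (⇑𝒞) (convMem (⇑𝒞) M (pad L) (pad S) a) 1
          (fun r => pad S (a + r)) i) : ℝ) := by
      exact_mod_cast hle
    have hnat : (b - 1 - a) + 1 ≤ ((b - 1 - a) / η + 1) * η := by
      have h1 := Nat.div_add_mod (b - 1 - a) η
      have h2 := Nat.mod_lt (b - 1 - a) hηpos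
      have h3 : ((b - 1 - a) / η + 1) * η = (b - 1 - a) / η * η + η := by ring
      have h4 : (b - 1 - a) / η * η = η * ((b - 1 - a) / η) := Nat.mul_comm _ _
      linarith
    have hDb : (b : ℝ) - a = ((b - 1 - a : ℕ) : ℝ) + 1 := by
      have h : (b - 1 - a) + 1 + a = b := by omega
      have h' : ((b - 1 - a : ℕ) : ℝ) + 1 + (a : ℝ) = (b : ℝ) := by exact_mod_cast h
      linarith
    have harith : ((b : ℝ) - a) / η - 1 ≤ (((b - 1 - a) / η : ℕ) : ℝ) := by
      rw [sub_le_iff_le_add, div_le_iff₀ hηR]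
      have h5 : ((b - 1 - a : ℕ) : ℝ) + 1 ≤ ((((b - 1 - a) / η : ℕ) : ℝ) + 1) * (η : ℝ) := by
        exact_mod_cast hnat
      linarith
    linarith
  · -- degenerate case : b ≤ a
    rw [Finset.Ico_eq_empty (by omega : ¬ a < b - 1), Finset.sum_empty]
    have hba : (b : ℝ) ≤ (a : ℝ) := by exact_mod_cast Nat.not_lt.mp hab
    have h0 : ((b : ℝ) - a) / η ≤ 0 :=
      div_nonpos_iff.mpr (Or.inr ⟨by linarith, by linarith⟩)
    linarith
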